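/- arXiv:2105.08880 — 2 statements merged into one kernel-verified Lean document; each statement's English description precedes it below -/
import Mathlib

section
/- Let a_n be the number of planar binary trees with n leaves avoiding the 4-leaf left-comb pattern (the tree m(m(m(x,x),x),x)). Then a_n equals the Motzkin number M_{n-1}; equivalently the generating function G(z) = Σ a_n z^n satisfies G = z + zG + zG^2 as formal power series. -/
inductive BTree where
  | leaf : BTree
  | node : BTree → BTree → BTree
  deriving DecidableEq

namespace BTree

def numLeaves : BTree → ℕ
  | leaf => 1
  | node l r => numLeaves l + numLeaves r

/-- `IsRootedSubtree p t` : the tree `t` can be obtained from `p` by grafting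
trees onto the free ends (leaves) of `p`; i.e. the pattern `p` matches at the
root of `t`, leaves of `p` acting as wildcards. -/
inductive IsRootedSubtree : BTree → BTree → Prop
  | leaf (t : BTree) : IsRootedSubtree leaf t
  | node {l r l' r' : BTree} : IsRootedSubtree l l' → IsRootedSubtree r r' →
      IsRootedSubtree (node l r) (node l' r')

/-- `IsSubtree s t` : `s` is the subtree of `t` rooted at some vertex of `t`
(taking all descendants). -/
inductive IsSubtree : BTree → BTree → Prop
  | refl (t : BTree) : IsSubtree t t
  | left {s l r : BTree} : IsSubtree s l → IsSubtree s (node l r)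
  | right {s l r : BTree} : IsSubtree s r → IsSubtree s (node l r)

/-- `t` contains the pattern `p`: some subtree of `t` is an instance of `p`. -/
def Contains (p t : BTree) : Prop := ∃ s, IsSubtree s t ∧ IsRootedSubtree p s

/-- `t` avoids the pattern `p`. -/
def Avoids (p t : BTree) : Prop := ¬ Contains p t

end BTree


namespace BTComb

open BTree

abbrev P : BTree := .node (.node (.node .leaf .leaf) .leaf) .leaf

lemma numLeaves_pos (t : BTree) : 1 ≤ t.numLeaves := by
  induction t with
  | leaf => simp [numLeaves]
  | node l r hl hr => simp [numLeaves]; omega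

lemma rooted_P_iff (t : BTree) :
    IsRootedSubtree P t ↔ ∃ a b c d, t = .node (.node (.node a b) c) d := by
  constructor
  · rintro (_ | ⟨(_ | ⟨(_ | ⟨ha, hb⟩), hc⟩), hd⟩)
    exact ⟨_, _, _, _, rfl⟩
  · rintro ⟨a, b, c, d, rfl⟩
    exact .node (.node (.node (.leaf _) (.leaf _)) (.leaf _)) (.leaf _)

lemma contains_node_iff (p l r : BTree) :
    Contains p (.node l r) ↔ IsRootedSubtree p (.node l r) ∨ Contains p l ∨ Contains p r := by
  constructor
  · rintro ⟨s, hs, hp⟩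
    cases hs with
    | refl => exact Or.inl hp
    | left h => exact Or.inr (Or.inl ⟨s, h, hp⟩)
    | right h => exact Or.inr (Or.inr ⟨s, h, hp⟩)
  · rintro (h | ⟨s, hs, hp⟩ | ⟨s, hs, hp⟩)
    exacts [⟨_, .refl _, h⟩, ⟨s, .left hs, hp⟩, ⟨s, .right hs, hp⟩]

lemma avoids_leaf : Avoids P .leaf := by
  rintro ⟨s, hs, hp⟩
  cases hs
  rcases (rooted_P_iff _).mp hp with ⟨a, b, c, d, h⟩
  exact absurd h (by simp)

lemma avoids_node_iff (l r : BTree) :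
    Avoids P (.node l r) ↔ Avoids P l ∧ Avoids P r ∧
      (l = .leaf ∨ ∃ a, l = .node .leaf a) := by
  rw [Avoids, contains_node_iff, rooted_P_iff]
  constructor
  · intro h
    refine ⟨fun h' => h (Or.inr (Or.inl h')), fun h' => h (Or.inr (Or.inr h')), ?_⟩
    match l with
    | .leaf => exact Or.inl rfl
    | .node .leaf a => exact Or.inr ⟨a, rfl⟩
    | .node (.node a b) c => exact (h (Or.inl ⟨a, b, c, r, rfl⟩)).elim
  · rintro ⟨hl, hr, hshape⟩
    rintro (⟨a, b, c, d, heq⟩ | h | h)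
    · rcases hshape with rfl | ⟨e, rfl⟩ <;> simp_all
    · exact hl h
    · exact hr h

def A : ℕ → Finset BTree
  | 0 => ∅
  | 1 => {.leaf}
  | (n+2) =>
      ((A (n+1)).image (.node .leaf)) ∪
      (Finset.range (n+2)).attach.biUnion (fun k =>
        have : k.1 < n + 2 := Finset.mem_range.mp k.2
        ((A k.1) ×ˢ (A (n+1-k.1))).image fun p => .node (.node .leaf p.1) p.2)
  termination_by n => n
  decreasing_by all_goals omega

lemma mem_A : ∀ n t, t ∈ A n ↔ t.numLeaves = n ∧ Avoids P t := by
  intro n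
  induction n using Nat.strong_induction_on with
  | _ n ih =>
    intro t
    match n, t with
    | 0, t =>
      simp only [A, Finset.notMem_empty, false_iff]
      rintro ⟨h, -⟩
      have := numLeaves_pos t
      omega
    | 1, .leaf => simp [A, numLeaves, avoids_leaf]
    | 1, .node l r =>
      simp only [A, Finset.mem_singleton]
      have := numLeaves_pos l; have := numLeaves_pos r
      constructor
      · rintro h; exact absurd h (by simp)
      · rintro ⟨h, -⟩; simp [numLeaves] at h; omega
    | (n+2), .leaf =>
      simp only [A, Finset.mem_union, Finset.mem_image, Finset.mem_biUnion, Finset.mem_product,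
        numLeaves]
      constructor
      · rintro (⟨a, -, h⟩ | ⟨k, -, ⟨a, b⟩, -, h⟩) <;> exact absurd h (by simp)
      · rintro ⟨h, -⟩; omega
    | (n+2), .node l r =>
      have hl1 := numLeaves_pos l; have hr1 := numLeaves_pos r
      rw [avoids_node_iff]
      simp only [A, Finset.mem_union, Finset.mem_image, Finset.mem_biUnion, Finset.mem_product,
        Finset.mem_attach, true_and, Subtype.exists, Finset.mem_range]
      constructor
      · rintro (⟨a, ha, heq⟩ | ⟨k, hk, ⟨a, b⟩, ⟨ha, hb⟩, heq⟩)
        · injection heq with h1 h2; subst h1; subst h2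
          obtain ⟨hn, hav⟩ := (ih (n+1) (by omega) a).mp ha
          exact ⟨by simp [numLeaves]; omega, avoids_leaf, hav, Or.inl rfl⟩
        · injection heq with h1 h2; subst h1; subst h2
          obtain ⟨hna, hava⟩ := (ih k hk a).mp ha
          obtain ⟨hnb, havb⟩ := (ih (n+1-k) (by omega) b).mp hb
          have hk1 : 1 ≤ k := hna ▸ numLeaves_pos a
          refine ⟨by simp [numLeaves]; omega, ?_, havb, Or.inr ⟨a, rfl⟩⟩
          rw [avoids_node_iff]
          exact ⟨avoids_leaf, hava, Or.inl rfl⟩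
      · rintro ⟨hn, havl, havr, (rfl | ⟨a, rfl⟩)⟩
        · left
          refine ⟨r, (ih (n+1) (by omega) r).mpr ⟨?_, havr⟩, rfl⟩
          simp [numLeaves] at hn; omega
        · right
          simp only [numLeaves] at hn
          have ha1 := numLeaves_pos a
          rw [avoids_node_iff] at havl
          refine ⟨a.numLeaves, by omega, ⟨a, r⟩, ⟨?_, ?_⟩, rfl⟩
          · exact (ih a.numLeaves (by omega) a).mpr ⟨rfl, havl.2.1⟩
          · exact (ih (n+1-a.numLeaves) (by omega) r).mpr ⟨by omega, havr⟩

lemma numLeaves_of_mem {n : ℕ} {t : BTree} (h : t ∈ A n) : t.numLeaves = n :=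
  ((mem_A n t).mp h).1

lemma inj2 : Function.Injective (fun p : BTree × BTree => BTree.node (.node .leaf p.1) p.2) := by
  rintro ⟨a, b⟩ ⟨c, d⟩ h
  simp only [BTree.node.injEq] at h
  simp [h.1.2, h.2]

lemma card_A_rec (n : ℕ) :
    (A (n+2)).card = (A (n+1)).card +
      ∑ k ∈ Finset.range (n+2), (A k).card * (A (n+1-k)).card := by
  rw [A]
  rw [Finset.card_union_of_disjoint]
  · congr 1
    · exact Finset.card_image_of_injective _ (fun a b h => by injection h)
    · rw [Finset.card_biUnion]
      · rw [← Finset.sum_attach (Finset.range (n+2))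
          (fun k => (A k).card * (A (n+1-k)).card)]
        refine Finset.sum_congr rfl fun k _ => ?_
        rw [Finset.card_image_of_injective _ inj2, Finset.card_product]
      · rintro ⟨k, hk⟩ - ⟨k', hk'⟩ - hne
        simp only [Finset.disjoint_left, Finset.mem_image, Finset.mem_product]
        rintro t ⟨⟨a, b⟩, ⟨ha, hb⟩, rfl⟩ ⟨⟨c, d⟩, ⟨hc, hd⟩, heq⟩
        simp only [BTree.node.injEq] at heq
        apply hne
        apply Subtype.ext
        show k = k'
        rw [← numLeaves_of_mem ha, ← numLeaves_of_mem hc, heq.1.2]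
  · simp only [Finset.disjoint_left, Finset.mem_image, Finset.mem_biUnion]
    rintro t ⟨a, ha, rfl⟩ ⟨k, -, ⟨c, d⟩, -, heq⟩
    simp at heq

def cA (n : ℕ) : ℕ := (A (n+1)).card

lemma cA_zero : cA 0 = 1 := by simp [cA, A]

lemma cA_rec (n : ℕ) :
    cA (n+1) = cA n + ∑ k ∈ Finset.range n, cA k * cA (n - 1 - k) := by
  have hA0 : (A 0).card = 0 := by simp [A]
  have hsum : ∑ k ∈ Finset.range (n+2), (A k).card * (A (n+1-k)).card
      = ∑ k ∈ Finset.range n, cA k * cA (n - 1 - k) := by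
    rw [Finset.sum_range_succ', Finset.sum_range_succ]
    simp only [hA0, Nat.zero_mul, Nat.mul_zero, Nat.add_zero, Nat.zero_add, Nat.sub_self]
    refine Finset.sum_congr rfl fun k hk => ?_
    rw [Finset.mem_range] at hk
    simp only [cA]
    have h : n + 1 - (k + 1) = n - 1 - k + 1 := by omega
    rw [h]
  rw [cA, card_A_rec, hsum]
  rfl

lemma M_eq (M : ℕ → ℕ) (h0 : M 0 = 1)
    (hrec : ∀ n : ℕ, M (n + 1) = M n + ∑ k ∈ Finset.range n, M k * M (n - 1 - k)) :
    ∀ n, M n = cA n := by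
  intro n
  induction n using Nat.strong_induction_on with
  | _ n ih =>
    match n with
    | 0 => rw [h0, cA_zero]
    | (m+1) =>
      rw [hrec, cA_rec, ih m (by omega)]
      congr 1
      refine Finset.sum_congr rfl fun k hk => ?_
      rw [Finset.mem_range] at hk
      rw [ih k (by omega), ih (m-1-k) (by omega)]

lemma natCard_eq (n : ℕ) :
    Nat.card {t : BTree // t.numLeaves = n ∧ Avoids P t} = (A n).card := by
  rw [← Nat.card_eq_finsetCard (A n)]
  exact Nat.card_congr (Equiv.subtypeEquivRight fun t => (mem_A n t).symm)

lemma intCard_rec (n : ℕ) :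
    ((A (n+2)).card : ℤ) = ((A (n+1)).card : ℤ) +
      ∑ k ∈ Finset.range (n+2), ((A k).card : ℤ) * ((A (n+1-k)).card : ℤ) := by
  rw [card_A_rec n]
  push_cast
  ring

end BTComb


open BTComb

open PowerSeries in
/-- Let `a_n` be the number of planar binary trees with `n` leaves avoiding
the 4-leaf left comb `m(m(m(x,x),x),x)`.  Then `a_n` is the Motzkin number
`M_{n-1}` (where `M` satisfies the Motzkin recurrence); equivalently the
generating function `G(z) = Σ a_n z^n` satisfies `G = z + zG + zG²`. -/
theorem avoid_left_comb_four_motzkin :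
    (∀ M : ℕ → ℕ, M 0 = 1 →
      (∀ n : ℕ, M (n + 1) = M n + ∑ k ∈ Finset.range n, M k * M (n - 1 - k)) →
      ∀ n : ℕ, 1 ≤ n →
        Nat.card {t : BTree // t.numLeaves = n ∧
          BTree.Avoids (BTree.node (BTree.node (BTree.node BTree.leaf BTree.leaf)
            BTree.leaf) BTree.leaf) t} = M (n - 1)) ∧
    (PowerSeries.mk fun n => (Nat.card {t : BTree // t.numLeaves = n ∧
        BTree.Avoids (BTree.node (BTree.node (BTree.node BTree.leaf BTree.leaf)
          BTree.leaf) BTree.leaf) t} : ℤ)) =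
      X + X * (PowerSeries.mk fun n => (Nat.card {t : BTree // t.numLeaves = n ∧
        BTree.Avoids (BTree.node (BTree.node (BTree.node BTree.leaf BTree.leaf)
          BTree.leaf) BTree.leaf) t} : ℤ))
        + X * (PowerSeries.mk fun n => (Nat.card {t : BTree // t.numLeaves = n ∧
        BTree.Avoids (BTree.node (BTree.node (BTree.node BTree.leaf BTree.leaf)
          BTree.leaf) BTree.leaf) t} : ℤ)) ^ 2 := by
  constructor
  · intro M h0 hrec n hn
    match n, hn with
    | (m+1), _ =>
      rw [natCard_eq, M_eq M h0 hrec]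
      rfl
  · have hG : (PowerSeries.mk fun n => (Nat.card {t : BTree // t.numLeaves = n ∧
        BTree.Avoids (BTree.node (BTree.node (BTree.node BTree.leaf BTree.leaf)
          BTree.leaf) BTree.leaf) t} : ℤ)) = PowerSeries.mk (fun n => ((A n).card : ℤ)) := by
      apply congrArg
      funext n
      rw [natCard_eq]
    rw [hG]
    set G : PowerSeries ℤ := PowerSeries.mk (fun n => ((A n).card : ℤ)) with hGdef
    have h2 : G ^ 2 = G * G := sq G
    apply PowerSeries.ext
    intro n
    match n with
    | 0 =>
      rw [map_add, map_add, coeff_zero_X_mul, coeff_zero_X_mul, coeff_X, hGdef, coeff_mk]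
      simp [A]
    | 1 =>
      rw [show (1:ℕ) = 0 + 1 from rfl, map_add, map_add, coeff_succ_X_mul, coeff_succ_X_mul,
        coeff_X, h2, coeff_mul, hGdef]
      rw [show (0:ℕ) = 0 + 0 from rfl]
      simp [A]
    | (m+2) =>
      rw [show m + 2 = (m + 1) + 1 from rfl, map_add, map_add, coeff_succ_X_mul, h2,
        coeff_succ_X_mul, coeff_X, if_neg (by omega : ¬ m + 1 + 1 = 1), coeff_mul,
        Finset.Nat.sum_antidiagonal_eq_sum_range_succ_mk, hGdef]
      simp only [coeff_mk]
      rw [intCard_rec m]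
      ring
end

section
/- Fix a finite set Y of planar binary tree patterns and let L_d denote the set of trees of height at most d avoiding Y, where d is the maximal height of a pattern in Y. For t in L_d define M_t as the set of Y-avoiding trees obtained from t by grafting, minus the union of such sets over all s in L_d with t a proper rooted subtree of s. Then the set L of all Y-avoiding trees is the disjoint union of the sets M_t over t ∈ L_d. -/
namespace BTree

/-- Height: the maximal number of internal nodes on a branch. -/
def height : BTree → ℕ
  | leaf => 0
  | node l r => max (height l) (height r) + 1

variable (Y : Finset BTree)

/-- The set `L` of all trees avoiding the pattern set `Y`. -/
def AvSet : Set BTree := {t | ∀ p ∈ Y, Avoids p t}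

/-- `L_d` : the `Y`-avoiding trees of height at most `d`, where
`d = Y.sup height` is the maximal pattern height. -/
def AvSetLow : Set BTree := {t ∈ AvSet Y | t.height ≤ Y.sup height}

/-- `M̂_t` : all `Y`-avoiding trees obtained from `t` by grafting. -/
def Mhat (t : BTree) : Set BTree := {v ∈ AvSet Y | IsRootedSubtree t v}

/-- `M_t = M̂_t \ ⋃_{s ∈ L_d, t ⊏ s} M̂_s`. -/
def Mcell (t : BTree) : Set BTree :=
  Mhat Y t \ ⋃ s ∈ {s ∈ AvSetLow Y | IsRootedSubtree t s ∧ t ≠ s}, Mhat Y s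

end BTree

namespace BTree

/-- Truncation of a tree to height at most `n`. -/
def trunc : ℕ → BTree → BTree
  | 0, _ => leaf
  | _ + 1, leaf => leaf
  | n + 1, node l r => node (trunc n l) (trunc n r)

theorem height_trunc (n : ℕ) (t : BTree) : (trunc n t).height ≤ n := by
  induction n generalizing t with
  | zero => cases t <;> simp [trunc, height]
  | succ n ih =>
    cases t with
    | leaf => simp [trunc, height]
    | node l r => simp [trunc, height]; exact ⟨ih l, ih r⟩

theorem rooted_trunc (n : ℕ) (t : BTree) : IsRootedSubtree (trunc n t) t := by
  induction n generalizing t with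
  | zero => exact .leaf t
  | succ n ih =>
    cases t with
    | leaf => exact .leaf _
    | node l r => exact .node (ih l) (ih r)

theorem rooted_trunc_of_le {t v : BTree} {n : ℕ} (h : IsRootedSubtree t v)
    (hn : t.height ≤ n) : IsRootedSubtree t (trunc n v) := by
  induction h generalizing n with
  | leaf => exact .leaf _
  | @node l r l' r' hl hr ihl ihr =>
    cases n with
    | zero => simp [height] at hn
    | succ n =>
      simp only [height, Nat.add_le_add_iff_right, max_le_iff] at hn
      exact .node (ihl hn.1) (ihr hn.2)

theorem rooted_refl (t : BTree) : IsRootedSubtree t t := by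
  induction t with
  | leaf => exact .leaf _
  | node l r ihl ihr => exact .node ihl ihr

theorem rooted_trans {a b c : BTree} (h1 : IsRootedSubtree a b)
    (h2 : IsRootedSubtree b c) : IsRootedSubtree a c := by
  induction h1 generalizing c with
  | leaf => exact .leaf _
  | node hl hr ihl ihr =>
    cases h2 with
    | node h2l h2r => exact .node (ihl h2l) (ihr h2r)

theorem rooted_antisymm {a b : BTree} (h1 : IsRootedSubtree a b)
    (h2 : IsRootedSubtree b a) : a = b := by
  induction h1 with
  | leaf t => cases h2 with | leaf => rfl
  | node hl hr ihl ihr =>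
    cases h2 with
    | node h2l h2r => rw [ihl h2l, ihr h2r]

theorem contains_of_rooted {p a b : BTree} (hab : IsRootedSubtree a b)
    (h : Contains p a) : Contains p b := by
  obtain ⟨s, hs, hps⟩ := h
  induction hs generalizing b with
  | refl => exact ⟨b, .refl b, rooted_trans hps hab⟩
  | left hsl ih =>
    cases hab with
    | node hl hr =>
      obtain ⟨u, hu, hpu⟩ := ih hl
      exact ⟨u, .left hu, hpu⟩
  | right hsr ih =>
    cases hab with
    | node hl hr =>
      obtain ⟨u, hu, hpu⟩ := ih hr
      exact ⟨u, .right hu, hpu⟩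

theorem avSet_of_rooted {Y : Finset BTree} {a b : BTree} (hab : IsRootedSubtree a b)
    (hb : b ∈ AvSet Y) : a ∈ AvSet Y :=
  fun p hp hc => hb p hp (contains_of_rooted hab hc)

end BTree

open BTree in
/-- The set `L` of all `Y`-avoiding trees is the disjoint union of the sets
`M_t` over `t ∈ L_d`. -/
theorem avoiding_trees_partition (Y : Finset BTree) :
    (⋃ t ∈ AvSetLow Y, Mcell Y t) = AvSet Y ∧
    ∀ t ∈ AvSetLow Y, ∀ s ∈ AvSetLow Y, t ≠ s →
      Disjoint (Mcell Y t) (Mcell Y s) := by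
  set d := Y.sup height with hd
  -- key: membership in a cell pins down the index as the truncation
  have key : ∀ t ∈ AvSetLow Y, ∀ v ∈ Mcell Y t, t = trunc d v := by
    intro t ht v hv
    obtain ⟨⟨hvAv, htv⟩, hnot⟩ := hv
    by_contra hne
    apply hnot
    refine Set.mem_iUnion.2 ⟨trunc d v, Set.mem_iUnion.2 ⟨?_, hvAv, rooted_trunc d v⟩⟩
    exact ⟨⟨avSet_of_rooted (rooted_trunc d v) hvAv, height_trunc d v⟩,
      rooted_trunc_of_le htv ht.2, hne⟩
  constructor
  · ext v
    simp only [Set.mem_iUnion, exists_prop]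
    constructor
    · rintro ⟨t, ht, hv⟩
      exact hv.1.1
    · intro hv
      refine ⟨trunc d v, ⟨avSet_of_rooted (rooted_trunc d v) hv, height_trunc d v⟩,
        ⟨⟨hv, rooted_trunc d v⟩, ?_⟩⟩
      rintro hmem
      simp only [Set.mem_iUnion, Set.mem_setOf_eq] at hmem
      obtain ⟨S, ⟨hSlow, hts, hne⟩, hvS⟩ := hmem
      exact hne (rooted_antisymm hts (rooted_trunc_of_le hvS.2 hSlow.2))
  · intro t ht s hs hts
    rw [Set.disjoint_left]
    intro v hvt hvs
    exact hts ((key t ht v hvt).trans (key s hs v hvs).symm)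
end
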